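/- For any relatively prime positive integers p ≥ q, there exist a positive integer k and integers m₁,…,m_k with m₁ > 0, m_k > 0, and m_i ≥ 0 for 1 < i < k, such that p/q = [a₁, a₂, …, a_k]⁻ where a₁ = m₁ when k = 1, and when k > 1, a₁ = m₁ + 1, a_k = m_k + 1, and a_i = m_i + 2 for 1 < i < k. Moreover this sequence (m₁,…,m_k) is unique. -/

import Mathlib

/-!
If all entries of `l` are `≥ 2` then `1 / [l]⁻ ∈ [0, 1)` (for `l = []` through the junk value
`1 / 0 = 0`), so `[a :: l]⁻ = a - 1 / [l]⁻` has ceiling `a`. Hence such expansions are unique, and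
they exist for every `p / q > 1` by the ceiling variant of Euclid's algorithm,
`p / q = a - 1 / (q / r)` with `a = ⌊p / q⌋ + 1`, `r = a q - p < q`.
The passage `m ↦ a` is a bijection of integer lists, under which the valid multiplier sequences
correspond exactly to `[1]` and the nonempty lists with all entries `≥ 2`; as `[1]⁻ = 1` while the
others have value `> 1`, the theorem follows.
-/

/-- The negative continued fraction `[a₁, …, a_k]⁻`, with `1/0 = 0` junk convention. -/
def ncf : List ℤ → ℚ
  | [] => 0
  | a :: l => (a : ℚ) - 1 / ncf l

/-- From multipliers `m₁, …, m_k` form `a₁, …, a_k`: if `k = 1` then `a₁ = m₁`; if `k > 1`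
then `a₁ = m₁ + 1`, `a_k = m_k + 1`, and `aᵢ = mᵢ + 2` for `1 < i < k`. -/
def mkA (m : List ℤ) : List ℤ :=
  if m.length ≤ 1 then m
  else m.mapIdx fun i x => if i = 0 ∨ i = m.length - 1 then x + 1 else x + 2

/-- A valid multiplier sequence: nonempty, `m₁ > 0`, `m_k > 0`, `mᵢ ≥ 0` for `1 < i < k`. -/
def GoodM (m : List ℤ) : Prop :=
  m ≠ [] ∧ 0 < m.headI ∧ 0 < m.getLast! ∧
    ∀ i, 0 < i → i + 1 < m.length → 0 ≤ m.getD i 0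

theorem ncf_cons (a : ℤ) (l : List ℤ) : ncf (a :: l) = a - 1 / ncf l := rfl

theorem one_div_ncf_mem_Ico {l : List ℤ} (hl : ∀ a ∈ l, 2 ≤ a) : 1 / ncf l ∈ Set.Ico 0 1 := by
  induction l with
  | nil => simp [ncf]
  | cons a l ih =>
    obtain ⟨h₀, h₁⟩ := ih fun b hb => hl b (List.mem_cons_of_mem a hb)
    have ha : (2 : ℚ) ≤ a := by exact_mod_cast hl a List.mem_cons_self
    have hgt : 1 < ncf (a :: l) := by rw [ncf_cons]; linarith
    exact ⟨by positivity, (div_lt_one (by linarith)).2 hgt⟩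

theorem one_lt_ncf_cons {a : ℤ} {l : List ℤ} (hl : ∀ b ∈ a :: l, 2 ≤ b) : 1 < ncf (a :: l) := by
  have ha : (2 : ℚ) ≤ a := by exact_mod_cast hl a List.mem_cons_self
  have := (one_div_ncf_mem_Ico fun b hb => hl b (List.mem_cons_of_mem a hb)).2
  rw [ncf_cons]
  linarith

theorem ceil_ncf_cons {a : ℤ} {l : List ℤ} (hl : ∀ b ∈ l, 2 ≤ b) : ⌈ncf (a :: l)⌉ = a := by
  obtain ⟨h₀, h₁⟩ := one_div_ncf_mem_Ico hl
  rw [Int.ceil_eq_iff, ncf_cons]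
  constructor <;> linarith

theorem ncf_injOn : Set.InjOn ncf {l | ∀ a ∈ l, 2 ≤ a} := by
  intro l₁ hl₁ l₂ hl₂ h
  induction l₁ generalizing l₂ with
  | nil =>
    cases l₂ with
    | nil => rfl
    | cons b t => exact absurd h (zero_lt_one.trans (one_lt_ncf_cons hl₂)).ne
  | cons a t₁ ih =>
    cases l₂ with
    | nil => exact absurd h (zero_lt_one.trans (one_lt_ncf_cons hl₁)).ne'
    | cons b t₂ =>
      have ht₁ : ∀ x ∈ t₁, 2 ≤ x := fun x hx => hl₁ x (List.mem_cons_of_mem a hx)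
      have ht₂ : ∀ x ∈ t₂, 2 ≤ x := fun x hx => hl₂ x (List.mem_cons_of_mem b hx)
      obtain rfl : a = b := by rw [← ceil_ncf_cons (a := a) ht₁, h, ceil_ncf_cons ht₂]
      rw [ncf_cons, ncf_cons, sub_right_inj, one_div, one_div, inv_inj] at h
      rw [ih ht₁ ht₂ h]

theorem exists_ncf_eq_div {p q : ℕ} (hq : 0 < q) (hqp : q < p) :
    ∃ l : List ℤ, l ≠ [] ∧ (∀ a ∈ l, 2 ≤ a) ∧ ncf l = p / q := by
  induction q using Nat.strong_induction_on generalizing p with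
  | _ q ih =>
  by_cases hdvd : q ∣ p
  · obtain ⟨c, rfl⟩ := hdvd
    have hc : 2 ≤ c := by
      by_contra! h
      interval_cases c <;> omega
    refine ⟨[(c : ℤ)], List.cons_ne_nil _ _, by simpa using hc, ?_⟩
    simp [ncf, hq.ne']
  · have hmod : 0 < p % q := Nat.pos_of_ne_zero fun h => hdvd (Nat.dvd_of_mod_eq_zero h)
    have hmodq : p % q < q := Nat.mod_lt p hq
    obtain ⟨l, hne, hl, hval⟩ := ih (q - p % q) (by omega) (p := q) (by omega) (by omega)
    have hdiv : 1 ≤ p / q := (Nat.one_le_div_iff hq).2 hqp.le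
    refine ⟨((p / q + 1 : ℕ) : ℤ) :: l, List.cons_ne_nil _ _, ?_, ?_⟩
    · simp only [List.mem_cons, forall_eq_or_imp]
      exact ⟨by omega, hl⟩
    · have hpq : ((p / q : ℕ) : ℚ) * q + (p % q : ℕ) = p := by exact_mod_cast Nat.div_add_mod' p q
      have hr : ((q - p % q : ℕ) : ℚ) ≠ 0 := by norm_cast; omega
      rw [Nat.cast_sub hmodq.le] at hval hr
      rw [ncf_cons, hval, Int.cast_natCast, Nat.cast_succ, ← hpq]
      field_simp
      ring

def mkAOffset (n i : ℕ) : ℤ :=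
  if n ≤ 1 then 0 else if i = 0 ∨ i = n - 1 then 1 else 2

@[simp]
theorem length_mkA (m : List ℤ) : (mkA m).length = m.length := by
  unfold mkA; split <;> simp

theorem getElem_mkA (m : List ℤ) (i : ℕ) (h : i < (mkA m).length) :
    (mkA m)[i] = m[i]'(by simpa using h) + mkAOffset m.length i := by
  unfold mkA mkAOffset
  split
  · simp [*]
  · simp only [List.getElem_mapIdx]
    split <;> rfl

theorem mkA_injective : Function.Injective mkA := by
  intro m m' h
  have hlen : m.length = m'.length := by rw [← length_mkA, h, length_mkA]
  refine List.ext_getElem hlen fun i h₁ h₂ => ?_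
  have e := List.getElem_of_eq h (by simpa using h₁)
  rw [getElem_mkA, getElem_mkA] at e
  have : mkAOffset m.length i = mkAOffset m'.length i := by rw [hlen]
  linarith

theorem mkA_surjective : Function.Surjective mkA := by
  intro l
  refine ⟨l.mapIdx fun i x => x - mkAOffset l.length i, List.ext_getElem (by simp) ?_⟩
  intro i h₁ h₂
  rw [getElem_mkA]
  simp

theorem goodM_iff_of_two_le_length {m : List ℤ} (hm : 2 ≤ m.length) :
    GoodM m ↔ ∀ a ∈ mkA m, 2 ≤ a := by
  have hne : m ≠ [] := List.ne_nil_of_length_pos (by omega)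
  have hoff (i : ℕ) : mkAOffset m.length i = if i = 0 ∨ i = m.length - 1 then 1 else 2 := by
    simp [mkAOffset, show ¬m.length ≤ 1 by omega]
  rw [List.forall_mem_iff_getElem]
  simp only [length_mkA, getElem_mkA, hoff]
  have hhead : m.headI = m[0] := by obtain ⟨x, t, rfl⟩ := List.exists_cons_of_ne_nil hne; rfl
  have hlast : m.getLast! = m[m.length - 1] := by
    rw [List.getLast!_of_getLast? (List.getLast?_eq_some_getLast hne), List.getLast_eq_getElem]
  rw [GoodM, hhead, hlast]
  constructor
  · rintro ⟨-, hfirst, hlast, hmid⟩ i hi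
    split_ifs with hend
    · rcases hend with rfl | rfl <;> omega
    · have := hmid i (by omega) (by omega)
      rw [List.getD_eq_getElem _ _ hi] at this
      omega
  · intro h
    have hfirst := h 0 (by omega)
    have hlast := h (m.length - 1) (by omega)
    simp only [true_or, or_true, if_true] at hfirst hlast
    refine ⟨hne, by omega, by omega, fun i hi₀ hi => ?_⟩
    have := h i (by omega)
    rw [if_neg (by omega)] at this
    rw [List.getD_eq_getElem _ _ (by omega)]
    omega

def admissibleA : Set (List ℤ) := insert [1] {l | l ≠ [] ∧ ∀ a ∈ l, 2 ≤ a}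

theorem goodM_iff {m : List ℤ} : GoodM m ↔ mkA m ∈ admissibleA := by
  rcases m with _ | ⟨x, _ | ⟨y, t⟩⟩
  · simp [GoodM, mkA, admissibleA]
  · simp [GoodM, mkA, admissibleA]
    omega
  · have hlen : 2 ≤ (mkA (x :: y :: t)).length := by simp
    have hne : mkA (x :: y :: t) ≠ [1] := fun h => by simp [h] at hlen
    have hne' : mkA (x :: y :: t) ≠ [] := fun h => by simp [h] at hlen
    simp [admissibleA, goodM_iff_of_two_le_length, hne, hne']

theorem ncf_injOn_admissibleA : Set.InjOn ncf admissibleA := by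
  refine (Set.injOn_insert (by simp)).2 ⟨ncf_injOn.mono fun l hl => hl.2, ?_⟩
  rintro ⟨l, ⟨hne, hl⟩, h⟩
  obtain ⟨a, t, rfl⟩ := List.exists_cons_of_ne_nil hne
  exact (one_lt_ncf_cons hl).ne' (h.trans (by simp [ncf]))

theorem exists_mem_admissibleA_ncf_eq_div {p q : ℕ} (hq : 0 < q) (hqp : q ≤ p) :
    ∃ l ∈ admissibleA, ncf l = p / q := by
  rcases hqp.eq_or_lt with rfl | hlt
  · exact ⟨[1], Set.mem_insert _ _, by simp [ncf, hq.ne']⟩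
  · obtain ⟨l, hne, hl, hval⟩ := exists_ncf_eq_div hq hlt
    exact ⟨l, Or.inr ⟨hne, hl⟩, hval⟩

theorem stmt1_general (p q : ℕ) (hq : 0 < q) (hqp : q ≤ p) :
    ∃! m : List ℤ, GoodM m ∧ (p : ℚ) / (q : ℚ) = ncf (mkA m) := by
  obtain ⟨l, hl, hval⟩ := exists_mem_admissibleA_ncf_eq_div hq hqp
  obtain ⟨m, rfl⟩ := mkA_surjective l
  refine ⟨m, ⟨goodM_iff.2 hl, hval.symm⟩, fun m' ⟨hm', hval'⟩ => mkA_injective ?_⟩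
  exact ncf_injOn_admissibleA (goodM_iff.1 hm') hl (hval'.symm.trans hval.symm)

/-- For relatively prime positive integers `p ≥ q` there is a unique multiplier sequence
`m₁, …, m_k` (with `m₁, m_k > 0` and interior `mᵢ ≥ 0`) such that
`p/q = [a₁, …, a_k]⁻` for the associated `a`-sequence. -/
theorem stmt1 (p q : ℕ) (hp : 0 < p) (hq : 0 < q) (hqp : q ≤ p)
    (hcop : Nat.Coprime p q) :
    ∃! m : List ℤ, GoodM m ∧ (p : ℚ) / (q : ℚ) = ncf (mkA m) :=
  stmt1_general p q hq hqp
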